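/- Let n ≥ 2 and k̂ ≥ 1/8. The volumetric exponentiated Hencky energy F ↦ exp(k̂·(log det F)²) is rank-one convex on GL⁺(n): for every F ∈ GL⁺(n) and all ξ, η ∈ ℝⁿ, the map t ↦ exp(k̂·(log det(F + t·ξ⊗η))²) is convex on every interval I ⊆ ℝ such that det(F + t·ξ⊗η) > 0 for all t ∈ I. -/

import Mathlib

open Matrix Real

/-!
Along a rank-one line the determinant is affine, `det (F + t • ξ ⊗ η) = det F * (1 + t * ⟪F⁻¹ξ, η⟫)`
(matrix determinant lemma), so it suffices that `W s = exp (k * log s ^ 2)` is convex on `(0, ∞)`.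
This is a second-derivative computation:
`s² W''(s) / W(s) = 4k² log² s - 2k log s + 2k`, a quadratic in `log s` with discriminant
`4k² (1 - 8k) ≤ 0`.
-/

theorem Matrix.det_add_smul_vecMulVec {m α : Type*} [Fintype m] [DecidableEq m] [CommRing α]
    {A : Matrix m m α} (hA : IsUnit A.det) (u v : m → α) (t : α) :
    (A + t • vecMulVec u v).det = A.det * (1 + t * (v ⬝ᵥ A⁻¹ *ᵥ u)) := by
  rw [← smul_vecMulVec, vecMulVec_eq (Fin 1), det_add_replicateCol_mul_replicateRow hA,
    Matrix.mul_assoc, ← replicateCol_mulVec]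
  simp [replicateRow_mul_replicateCol_apply, mulVec_smul]

theorem ConvexOn.comp_det_add_smul_vecMulVec {m β : Type*} [Fintype m] [DecidableEq m]
    [AddCommMonoid β] [PartialOrder β] [SMul ℝ β] {s : Set ℝ} {W : ℝ → β}
    (hW : ConvexOn ℝ s W) {F : Matrix m m ℝ} (hF : F.det ≠ 0) (ξ η : m → ℝ) {I : Set ℝ}
    (hI : Convex ℝ I) (hdet : ∀ t ∈ I, (F + t • vecMulVec ξ η).det ∈ s) :
    ConvexOn ℝ I (fun t => W (F + t • vecMulVec ξ η).det) := by
  set g : ℝ →ᵃ[ℝ] ℝ := AffineMap.lineMap F.det (F.det * (1 + η ⬝ᵥ F⁻¹ *ᵥ ξ))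
  have hg : ∀ t, (F + t • vecMulVec ξ η).det = g t := fun t => by
    rw [det_add_smul_vecMulVec hF.isUnit, AffineMap.lineMap_apply_ring']
    ring
  simp only [hg] at hdet ⊢
  exact (hW.comp_affineMap g).subset hdet hI

theorem hasDerivAt_exp_mul_log_sq (k : ℝ) {s : ℝ} (hs : s ≠ 0) :
    HasDerivAt (fun s => exp (k * log s ^ 2)) (exp (k * log s ^ 2) * (2 * k * log s / s)) s := by
  refine (((hasDerivAt_log hs).fun_pow 2).const_mul k).exp.congr_deriv ?_
  push_cast
  ring

theorem hasDerivAt_deriv_exp_mul_log_sq (k : ℝ) {s : ℝ} (hs : s ≠ 0) :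
    HasDerivAt (fun s => exp (k * log s ^ 2) * (2 * k * log s / s))
      (exp (k * log s ^ 2) / s ^ 2 * ((2 * k * log s - 1 / 2) ^ 2 + (2 * k - 1 / 4))) s := by
  refine ((hasDerivAt_exp_mul_log_sq k hs).fun_mul
    (((hasDerivAt_log hs).const_mul (2 * k)).fun_div (hasDerivAt_id' s) hs)).congr_deriv ?_
  field_simp
  ring

theorem convexOn_exp_mul_log_sq {k : ℝ} (hk : 1 / 8 ≤ k) :
    ConvexOn ℝ (Set.Ioi 0) (fun s => exp (k * log s ^ 2)) := by
  refine convexOn_of_hasDerivWithinAt2_nonneg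
    (f' := fun s => exp (k * log s ^ 2) * (2 * k * log s / s))
    (f'' := fun s => exp (k * log s ^ 2) / s ^ 2 * ((2 * k * log s - 1 / 2) ^ 2 + (2 * k - 1 / 4)))
    (convex_Ioi 0)
    (fun s hs => (hasDerivAt_exp_mul_log_sq k (ne_of_gt hs)).continuousAt.continuousWithinAt)
    (fun s hs => ?_) (fun s hs => ?_) (fun s _ => ?_)
  · rw [interior_Ioi] at hs
    exact (hasDerivAt_exp_mul_log_sq k (ne_of_gt hs)).hasDerivWithinAt
  · rw [interior_Ioi] at hs
    exact (hasDerivAt_deriv_exp_mul_log_sq k (ne_of_gt hs)).hasDerivWithinAt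
  · have hk' : 0 ≤ 2 * k - 1 / 4 := by linarith
    positivity

theorem volumetric_exp_Hencky_rankOneConvex (n : ℕ) (khat : ℝ)
    (hkhat : 1 / 8 ≤ khat)
    (F : Matrix (Fin n) (Fin n) ℝ) (hF : 0 < F.det)
    (ξ η : Fin n → ℝ) (I : Set ℝ) (hI : Convex ℝ I)
    (hdet : ∀ t ∈ I, 0 < (F + t • Matrix.vecMulVec ξ η).det) :
    ConvexOn ℝ I
      (fun t => Real.exp (khat * Real.log (F + t • Matrix.vecMulVec ξ η).det ^ 2)) :=
  (convexOn_exp_mul_log_sq hkhat).comp_det_add_smul_vecMulVec hF.ne' ξ η hI hdet
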